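/- arXiv:1806.10644 — 3 statements merged into one kernel-verified Lean document; each statement's English description precedes it below -/
import Mathlib

section
/- Every continuous scalar piecewise affine function f : ℝ^{n_x} → ℝ can be written as the difference of two convex piecewise affine functions, i.e., there exist finitely many affine functions γ_1, …, γ_{r_γ} and η_1, …, η_{r_η} from ℝ^{n_x} to ℝ such that f(x) = max_{i=1,…,r_γ} γ_i(x) − max_{j=1,…,r_η} η_j(x) for all x ∈ ℝ^{n_x}. -/
open Finset Matrix

/-- The affine map `x ↦ W x + b`. -/
def affineMapVec {m n : ℕ} (W : Matrix (Fin m) (Fin n) ℝ) (b : Fin m → ℝ)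
    (x : Fin n → ℝ) : Fin m → ℝ :=
  fun i => (∑ j, W i j * x j) + b i

/-- Componentwise rectifier (ReLU). -/
def reluVec {n : ℕ} (v : Fin n → ℝ) : Fin n → ℝ := fun i => max 0 (v i)

/-- Parameters θ of a feed-forward ReLU network with `L ≥ 1` hidden layers of width `M`,
input dimension `nx` and output dimension `nu`:  the first hidden layer `(W1, b1)`,
the `L - 1` remaining hidden layers `(W l, b l)`, and the output layer `(Wout, bout)`. -/
structure ReLUNetParams (nx nu M L : ℕ) where
  W1 : Matrix (Fin M) (Fin nx) ℝ
  b1 : Fin M → ℝ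
  W : Fin (L - 1) → Matrix (Fin M) (Fin M) ℝ
  b : Fin (L - 1) → Fin M → ℝ
  Wout : Matrix (Fin nu) (Fin M) ℝ
  bout : Fin nu → ℝ

/-- The function `N(·; θ, M, L) = f_{L+1} ∘ g_L ∘ f_L ∘ ⋯ ∘ g_1 ∘ f_1` computed by the
ReLU network with parameters `θ`. -/
def ReLUNetParams.eval {nx nu M L : ℕ} (p : ReLUNetParams nx nu M L)
    (x : Fin nx → ℝ) : Fin nu → ℝ :=
  affineMapVec p.Wout p.bout <|
    (List.finRange (L - 1)).foldl
      (fun ξ l => reluVec (affineMapVec (p.W l) (p.b l) ξ))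
      (reluVec (affineMapVec p.W1 p.b1 x))

/-- A polyhedron `{x | Z x ≤ z}`. -/
def IsPolyhedron {n : ℕ} (S : Set (Fin n → ℝ)) : Prop :=
  ∃ (m : ℕ) (Z : Matrix (Fin m) (Fin n) ℝ) (z : Fin m → ℝ),
    S = {x | ∀ i, (∑ j, Z i j * x j) ≤ z i}

/-- `f` is piecewise affine on `D`: finitely many polyhedra with pairwise disjoint
interiors whose union is `D`, with `f` affine on each. -/
def IsPWAOn {n m : ℕ} (D : Set (Fin n → ℝ)) (f : (Fin n → ℝ) → Fin m → ℝ) : Prop :=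
  ∃ (r : ℕ) (R : Fin r → Set (Fin n → ℝ))
    (K : Fin r → Matrix (Fin m) (Fin n) ℝ) (g : Fin r → Fin m → ℝ),
    (∀ i, IsPolyhedron (R i)) ∧
    (∀ i j, i ≠ j → interior (R i) ∩ interior (R j) = ∅) ∧
    (⋃ i, R i) = D ∧
    (∀ i, ∀ x ∈ R i, f x = affineMapVec (K i) (g i) x)

/-- Scalar-valued piecewise affine function on `D`. -/
def IsPWAOnScalar {n : ℕ} (D : Set (Fin n → ℝ)) (f : (Fin n → ℝ) → ℝ) : Prop :=
  ∃ (r : ℕ) (R : Fin r → Set (Fin n → ℝ)) (a : Fin r → Fin n → ℝ) (c : Fin r → ℝ),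
    (∀ i, IsPolyhedron (R i)) ∧
    (∀ i j, i ≠ j → interior (R i) ∩ interior (R j) = ∅) ∧
    (⋃ i, R i) = D ∧
    (∀ i, ∀ x ∈ R i, f x = (∑ j, a i j * x j) + c i)

/-- `f` agrees with some affine function on the set `S`. -/
def AffineOnSet {n m : ℕ} (f : (Fin n → ℝ) → Fin m → ℝ) (S : Set (Fin n → ℝ)) : Prop :=
  ∃ (A : Matrix (Fin m) (Fin n) ℝ) (b : Fin m → ℝ), ∀ x ∈ S, f x = affineMapVec A b x

/-- A linear region of `f`: a nonempty open connected set on which `f` is affine,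
maximal with this property. -/
def IsLinearRegion {n m : ℕ} (f : (Fin n → ℝ) → Fin m → ℝ) (S : Set (Fin n → ℝ)) : Prop :=
  S.Nonempty ∧ IsOpen S ∧ IsConnected S ∧ AffineOnSet f S ∧
    ∀ S', IsOpen S' → IsConnected S' → S ⊂ S' → ¬ AffineOnSet f S'

/-- Maximum of a nonempty finite family of reals. -/
noncomputable def finMax {N : ℕ} (hN : 0 < N) (g : Fin N → ℝ) : ℝ :=
  Finset.univ.sup' (Finset.univ_nonempty_iff.mpr (Fin.pos_iff_nonempty.mp hN)) g

/-- The unit hypercube `[0,1]^n`. -/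
def unitCube (n : ℕ) : Set (Fin n → ℝ) := {x | ∀ i, 0 ≤ x i ∧ x i ≤ 1}

/-!
Ovchinnikov's max–min argument. On a line, the times `t ∈ [0, 1]` at which some piece lying
below `f` at `0` lies above `f` at `t` form a closed set that propagates to the right (two affine
functions cross at most once), so for any `y z` some piece lies below `f` at `y` and above it at
`z`. Hence, if `S x` is the set of pieces lying above `f` at `x`, then `min_{i ∈ S x} hᵢ ≤ f` with
equality at `x`, and `f` is a finite max of finite mins of affine functions. These are differences
of maxima of affine functions, since
`max (g₁ - h₁) (g₂ - h₂) = max (g₁ + h₂) (g₂ + h₁) - (h₁ + h₂)` and `min u v = -max (-u) (-v)`.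
-/

section MaxAffine

variable {E : Type*} [AddCommGroup E] [Module ℝ E]

def IsMaxAffine (φ : E → ℝ) : Prop :=
  ∃ (s : Finset (E →ᵃ[ℝ] ℝ)) (hs : s.Nonempty), ∀ x, φ x = s.sup' hs (· x)

def IsMaxAffineDiff (f : E → ℝ) : Prop :=
  ∃ g h : E → ℝ, IsMaxAffine g ∧ IsMaxAffine h ∧ f = g - h

lemma IsMaxAffine.of_affineMap (a : E →ᵃ[ℝ] ℝ) : IsMaxAffine a :=
  ⟨{a}, singleton_nonempty a, fun x => by rw [sup'_singleton]⟩

lemma IsMaxAffine.sup {φ ψ : E → ℝ} (hφ : IsMaxAffine φ) (hψ : IsMaxAffine ψ) :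
    IsMaxAffine (φ ⊔ ψ) := by
  classical
  obtain ⟨s, hs, hφ⟩ := hφ
  obtain ⟨t, ht, hψ⟩ := hψ
  exact ⟨s ∪ t, hs.mono subset_union_left, fun x => by
    rw [sup'_union hs ht, Pi.sup_apply, hφ, hψ]⟩

lemma IsMaxAffine.add {φ ψ : E → ℝ} (hφ : IsMaxAffine φ) (hψ : IsMaxAffine ψ) :
    IsMaxAffine (φ + ψ) := by
  classical
  obtain ⟨s, hs, hφ⟩ := hφ
  obtain ⟨t, ht, hψ⟩ := hψ
  open scoped Pointwise in
  refine ⟨s + t, hs.add ht, fun x => ?_⟩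
  simp only [add_def, sup'_image, sup'_product_left, Function.comp_def, AffineMap.coe_add,
    Pi.add_apply, ← add_sup', ← sup'_add, hφ, hψ]

lemma IsMaxAffineDiff.of_affineMap (a : E →ᵃ[ℝ] ℝ) : IsMaxAffineDiff a :=
  ⟨a, 0, .of_affineMap a, by simpa using IsMaxAffine.of_affineMap (0 : E →ᵃ[ℝ] ℝ), by simp⟩

lemma IsMaxAffineDiff.neg {f : E → ℝ} (hf : IsMaxAffineDiff f) : IsMaxAffineDiff (-f) := by
  obtain ⟨g, h, hg, hh, rfl⟩ := hf
  exact ⟨h, g, hh, hg, by simp⟩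

lemma IsMaxAffineDiff.sup {f₁ f₂ : E → ℝ} (hf₁ : IsMaxAffineDiff f₁) (hf₂ : IsMaxAffineDiff f₂) :
    IsMaxAffineDiff (f₁ ⊔ f₂) := by
  obtain ⟨g₁, h₁, hg₁, hh₁, rfl⟩ := hf₁
  obtain ⟨g₂, h₂, hg₂, hh₂, rfl⟩ := hf₂
  refine ⟨(g₁ + h₂) ⊔ (g₂ + h₁), h₁ + h₂, (hg₁.add hh₂).sup (hg₂.add hh₁), hh₁.add hh₂, ?_⟩
  ext x
  simp only [Pi.sup_apply, Pi.sub_apply, Pi.add_apply, ← max_sub_sub_right]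
  congr 1 <;> ring

lemma IsMaxAffineDiff.inf {f₁ f₂ : E → ℝ} (hf₁ : IsMaxAffineDiff f₁) (hf₂ : IsMaxAffineDiff f₂) :
    IsMaxAffineDiff (f₁ ⊓ f₂) := by
  simpa [neg_sup] using (hf₁.neg.sup hf₂.neg).neg

end MaxAffine

lemma exists_mem_closure_inter_of_subset_iUnion {X ι : Type*} [TopologicalSpace X] [Finite ι]
    {P : ι → Set X} {A : Set X} (hA : A ⊆ ⋃ i, P i) {x : X} (hx : x ∈ closure A) :
    ∃ i, x ∈ closure (P i ∩ A) := by
  rw [← Set.inter_eq_right.mpr hA, Set.iUnion_inter, closure_iUnion_of_finite] at hx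
  exact Set.mem_iUnion.mp hx

lemma AffineMap.le_of_lt_of_le_of_le {f g : ℝ →ᵃ[ℝ] ℝ} {a b c : ℝ} (hab : a ≤ b) (hbc : b ≤ c)
    (ha : g a < f a) (hb : f b ≤ g b) : f c ≤ g c := by
  by_contra! hc
  have hconv := ((convex_Iio (0 : ℝ)).affine_preimage (g - f)).ordConnected
  have hb' : g b - f b < 0 := hconv.out (sub_neg.mpr ha) (sub_neg.mpr hc) ⟨hab, hbc⟩
  exact (sub_neg.mp hb').not_ge hb

lemma Real.exists_piece_le_at_zero_ge_at_one {ι : Type*} [Finite ι] {φ : ℝ → ℝ} (hφ : Continuous φ)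
    {P : ι → Set ℝ} (hP : ∀ i, IsClosed (P i)) (hcover : ⋃ i, P i = Set.univ)
    {ψ : ι → ℝ →ᵃ[ℝ] ℝ} (hψ : ∀ i, Set.EqOn φ (ψ i) (P i)) :
    ∃ i, ψ i 0 ≤ φ 0 ∧ φ 1 ≤ ψ i 1 := by
  have hmem (t : ℝ) : ∃ i, t ∈ P i := Set.mem_iUnion.mp (hcover ▸ Set.mem_univ t)
  set T := ⋃ i, {t | ψ i 0 ≤ φ 0} ∩ {t | φ t ≤ ψ i t}
  suffices (1 : ℝ) ∈ T by simpa [T] using this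
  refine IsClosed.mem_of_ge_of_forall_exists_gt ?_ ?_ zero_le_one ?_
  · refine (isClosed_iUnion_of_finite fun i => ?_).inter isClosed_Icc
    exact (isClosed_le continuous_const continuous_const).inter
      (isClosed_le hφ (AffineMap.continuous_of_finiteDimensional _))
  · obtain ⟨i, hi⟩ := hmem 0
    exact Set.mem_iUnion.mpr ⟨i, (hψ i hi).symm.le, (hψ i hi).le⟩
  · rintro t ⟨htT, ht0, ht1⟩
    obtain ⟨i, hi0, hit⟩ := Set.mem_iUnion.mp htT
    have hclos : t ∈ closure (Set.Ioc t 1) := by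
      rw [closure_Ioc ht1.ne]; exact ⟨le_rfl, ht1.le⟩
    obtain ⟨j, hj⟩ := exists_mem_closure_inter_of_subset_iUnion
      (fun s _ => Set.mem_iUnion.mpr (hmem s)) hclos
    have htj : t ∈ P j := (hP j).closure_subset (closure_mono Set.inter_subset_left hj)
    obtain ⟨s, hsj, hts⟩ := closure_nonempty_iff.mp ⟨t, hj⟩
    refine ⟨s, Set.mem_iUnion.mpr ?_, hts⟩
    -- `ψ j` agrees with `φ` at `t` and `s`; if `ψ j` starts above `φ`, then `ψ i`, which starts
    -- below `ψ j` but is above it at `t`, stays above it at `s`.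
    by_cases hj0 : ψ j 0 ≤ φ 0
    · exact ⟨j, hj0, (hψ j hsj).le⟩
    · refine ⟨i, hi0, (hψ j hsj).trans_le ?_⟩
      exact AffineMap.le_of_lt_of_le_of_le ht0 hts.1.le (hi0.trans_lt (not_le.mp hj0))
        ((hψ j htj).symm.trans_le hit)

section Pieces

variable {E ι : Type*} [AddCommGroup E] [Module ℝ E] [TopologicalSpace E] [IsTopologicalAddGroup E]
  [ContinuousSMul ℝ E] {f : E → ℝ} {R : ι → Set E} {h : ι → E →ᵃ[ℝ] ℝ}

lemma exists_piece_le_at_ge_at [Finite ι] (hf : Continuous f) (hR : ∀ i, IsClosed (R i))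
    (hcover : ⋃ i, R i = Set.univ) (hfh : ∀ i, Set.EqOn f (h i) (R i)) (y z : E) :
    ∃ i, h i y ≤ f y ∧ f z ≤ h i z := by
  have hline : Continuous (AffineMap.lineMap y z : ℝ →ᵃ[ℝ] E) := AffineMap.lineMap_continuous
  simpa using Real.exists_piece_le_at_zero_ge_at_one (hf.comp hline)
    (fun i => (hR i).preimage hline) (by simp [← Set.preimage_iUnion, hcover])
    (ψ := fun i => (h i).comp (AffineMap.lineMap y z)) (fun i t ht => hfh i ht)

lemma exists_eq_sup'_inf' [Fintype ι] (hf : Continuous f) (hR : ∀ i, IsClosed (R i))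
    (hcover : ⋃ i, R i = Set.univ) (hfh : ∀ i, Set.EqOn f (h i) (R i)) :
    ∃ (𝒯 : Finset {T : Finset ι // T.Nonempty}) (h𝒯 : 𝒯.Nonempty),
      f = 𝒯.sup' h𝒯 fun T => T.1.inf' T.2 fun i => ⇑(h i) := by
  classical
  set G : {T : Finset ι // T.Nonempty} → E → ℝ := fun T => T.1.inf' T.2 fun i => ⇑(h i)
  have hmem (x : E) : ∃ i, x ∈ R i := Set.mem_iUnion.mp (hcover ▸ Set.mem_univ x)
  let S (x : E) : {T : Finset ι // T.Nonempty} :=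
    ⟨univ.filter fun i => f x ≤ h i x, (hmem x).elim fun i hi => ⟨i, by simp [hfh i hi]⟩⟩
  have hS_le (x : E) : G (S x) ≤ f := fun w => by
    obtain ⟨i, hiw, hix⟩ := exists_piece_le_at_ge_at hf hR hcover hfh w x
    calc G (S x) w = (S x).1.inf' (S x).2 (h · w) := Finset.inf'_apply ..
      _ ≤ h i w := Finset.inf'_le _ (Finset.mem_filter.mpr ⟨mem_univ i, hix⟩)
      _ ≤ f w := hiw
  have hS_eq (x : E) : G (S x) x = f x :=
    le_antisymm (hS_le x x) (by simp [G, S, Finset.inf'_apply])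
  let 𝒯 := univ.filter fun T => G T ≤ f
  have hS_mem (x : E) : S x ∈ 𝒯 := Finset.mem_filter.mpr ⟨mem_univ _, hS_le x⟩
  have h𝒯 : 𝒯.Nonempty := ⟨S 0, hS_mem 0⟩
  refine ⟨𝒯, h𝒯, le_antisymm (fun x => ?_) ?_⟩
  · rw [← hS_eq x, Finset.sup'_apply]
    exact Finset.le_sup' (fun T => G T x) (hS_mem x)
  · exact Finset.sup'_le _ _ fun T hT => (Finset.mem_filter.mp hT).2

theorem isMaxAffineDiff_of_isClosed_pieces [Fintype ι] (hf : Continuous f)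
    (hR : ∀ i, IsClosed (R i)) (hcover : ⋃ i, R i = Set.univ)
    (hfh : ∀ i, Set.EqOn f (h i) (R i)) : IsMaxAffineDiff f := by
  obtain ⟨𝒯, h𝒯, rfl⟩ := exists_eq_sup'_inf' hf hR hcover hfh
  refine Finset.sup'_induction _ _ (fun _ h₁ _ h₂ => h₁.sup h₂) fun T _ => ?_
  exact Finset.inf'_induction _ _ (fun _ h₁ _ h₂ => h₁.inf h₂) fun i _ => .of_affineMap (h i)

end Pieces

lemma Finset.exists_fin_succ_sup'_eq {α β : Type*} [SemilatticeSup β] (s : Finset α)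
    (hs : s.Nonempty) : ∃ (N : ℕ) (e : Fin (N + 1) → α),
      ∀ F : α → β, s.sup' hs F = univ.sup' univ_nonempty (F ∘ e) := by
  obtain ⟨N, hN⟩ := Nat.exists_eq_add_one.mpr (card_pos.mpr hs)
  let σ : Fin (N + 1) ≃ s := (s.equivFin.trans (finCongr hN)).symm
  refine ⟨N, fun i => σ i, fun F => le_antisymm ?_ ?_⟩
  · refine sup'_le _ _ fun a ha => ?_
    obtain ⟨i, rfl⟩ : ∃ i, (σ i : α) = a := ⟨σ.symm ⟨a, ha⟩, by simp⟩
    exact le_sup' (F ∘ fun i => (σ i : α)) (mem_univ i)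
  · exact sup'_le _ _ fun i _ => le_sup' F (σ i).2

lemma AffineMap.apply_eq_sum_mul_add {n : ℕ} (a : (Fin n → ℝ) →ᵃ[ℝ] ℝ) (x : Fin n → ℝ) :
    a x = ∑ j, a.linear (Pi.single j 1) * x j + a 0 := by
  classical
  rw [congrFun a.decomp x, Pi.add_apply]
  nth_rw 1 [pi_eq_sum_univ' x]
  simp only [map_sum, map_smul, smul_eq_mul, mul_comm]

lemma IsMaxAffine.exists_coeffs {n : ℕ} {φ : (Fin n → ℝ) → ℝ} (hφ : IsMaxAffine φ) :
    ∃ (N : ℕ) (a : Fin (N + 1) → Fin n → ℝ) (c : Fin (N + 1) → ℝ),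
      ∀ x, φ x = finMax (Nat.succ_pos N) fun i => ∑ j, a i j * x j + c i := by
  obtain ⟨s, hs, hφ⟩ := hφ
  obtain ⟨N, e, he⟩ := s.exists_fin_succ_sup'_eq (β := ℝ) hs
  refine ⟨N, fun i j => (e i).linear (Pi.single j 1), fun i => e i 0, fun x => ?_⟩
  simp only [hφ, he, finMax, Function.comp_def, AffineMap.apply_eq_sum_mul_add (e _) x]

def affineMapOfCoeffs {n : ℕ} (a : Fin n → ℝ) (c : ℝ) : (Fin n → ℝ) →ᵃ[ℝ] ℝ :=
  (Fintype.linearCombination ℝ a).toAffineMap + AffineMap.const ℝ _ c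

lemma affineMapOfCoeffs_apply {n : ℕ} (a : Fin n → ℝ) (c : ℝ) (x : Fin n → ℝ) :
    affineMapOfCoeffs a c x = ∑ j, a j * x j + c := by
  simp [affineMapOfCoeffs, Fintype.linearCombination_apply, mul_comm]

lemma IsPolyhedron.isClosed {n : ℕ} {S : Set (Fin n → ℝ)} (hS : IsPolyhedron S) : IsClosed S := by
  obtain ⟨m, Z, z, rfl⟩ := hS
  simp only [Set.ofPred_forall]
  exact isClosed_iInter fun i => isClosed_le (by fun_prop) continuous_const

/-- every continuous scalar PWA function on ℝ^{nx} is the difference of two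
convex PWA functions, each a pointwise maximum of finitely many affine functions. -/
theorem pwa_diff_of_convex (nx : ℕ) (f : (Fin nx → ℝ) → ℝ)
    (hcont : Continuous f) (hpwa : IsPWAOnScalar Set.univ f) :
    ∃ (rγ rη : ℕ) (aγ : Fin (rγ + 1) → Fin nx → ℝ) (cγ : Fin (rγ + 1) → ℝ)
      (aη : Fin (rη + 1) → Fin nx → ℝ) (cη : Fin (rη + 1) → ℝ),
      ∀ x, f x =
        finMax (Nat.succ_pos rγ) (fun i => (∑ j, aγ i j * x j) + cγ i) -
        finMax (Nat.succ_pos rη) (fun i => (∑ j, aη i j * x j) + cη i) := by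
  obtain ⟨r, R, a, c, hpoly, -, hcover, haff⟩ := hpwa
  obtain ⟨g, h, hg, hh, rfl⟩ := isMaxAffineDiff_of_isClosed_pieces hcont
    (fun i => (hpoly i).isClosed) hcover (h := fun i => affineMapOfCoeffs (a i) (c i))
    fun i x hx => by rw [haff i x hx, affineMapOfCoeffs_apply]
  obtain ⟨rγ, aγ, cγ, hγ⟩ := hg.exists_coeffs
  obtain ⟨rη, aη, cη, hη⟩ := hh.exists_coeffs
  exact ⟨rγ, rη, aγ, cγ, aη, cη, fun x => by rw [Pi.sub_apply, hγ, hη]⟩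
end

section
/- Let f : [0,1]^{n_x} → ℝ, f(x) = max_{i=1,…,N} f_i(x), be the pointwise maximum of N affine functions f_1, …, f_N, with f nonnegative on [0,1]^{n_x}. Then there exist parameters θ such that the deep ReLU network N(·;θ, n_x+1, N) of width M = n_x + 1 and depth L = N satisfies N(x;θ, n_x+1, N) = f(x) for all x ∈ [0,1]^{n_x}. -/
/-! Write `A_i x = a_i ⬝ᵥ x + c_i` and `M_l x = max_{i ≤ l} A_i x`. The network carries the
hidden state `(x, M_l x - A_l x)`: layer `l + 1` adds `A_l x - A_{l+1} x` to the last
coordinate, giving `M_l x - A_{l+1} x`, whose ReLU is `max (M_l x) (A_{l+1} x) - A_{l+1} x =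
M_{l+1} x - A_{l+1} x`; on the cube the ReLU leaves the copy of `x` unchanged. The output layer
adds `A_{N-1} x` back, which leaves `M_{N-1} x = f x`. -/

open Finset Matrix

theorem List.foldl_finRange_induction {α : Type*} {n : ℕ} (g : α → Fin n → α)
    (P : Fin (n + 1) → α → Prop) {init : α} (h0 : P 0 init)
    (hstep : ∀ l s, P l.castSucc s → P l.succ (g s l)) :
    P (Fin.last n) ((List.finRange n).foldl g init) := by
  rw [← Fin.foldl_eq_finRange_foldl]
  induction n generalizing init with
  | zero => simpa using h0
  | succ n ih =>
    rw [Fin.foldl_succ_last, ← Fin.succ_last]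
    refine hstep _ _ (ih (g · ·.castSucc) (fun i => P i.castSucc) (by simpa using h0) ?_)
    intro l s hs
    simpa only [Fin.succ_castSucc] using hstep _ _ hs

theorem ReLUNetParams.eval_eq_of_hiddenInvariant {nx nu M n : ℕ}
    (p : ReLUNetParams nx nu M (n + 1)) (x : Fin nx → ℝ) (P : Fin (n + 1) → (Fin M → ℝ) → Prop)
    (h0 : P 0 (reluVec (affineMapVec p.W1 p.b1 x)))
    (hstep : ∀ (l : Fin n) ξ, P l.castSucc ξ → P l.succ (reluVec (affineMapVec (p.W l) (p.b l) ξ))) :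
    ∃ ξ, P (Fin.last n) ξ ∧ p.eval x = affineMapVec p.Wout p.bout ξ :=
  ⟨_, List.foldl_finRange_induction (n := n) _ P h0 hstep, rfl⟩

section SnocAlgebra

variable {α : Type*} [NonUnitalNonAssocSemiring α] {m n : ℕ}

theorem Fin.snoc_dotProduct_snoc (u x : Fin n → α) (s t : α) :
    (Fin.snoc u s : Fin (n + 1) → α) ⬝ᵥ Fin.snoc x t = u ⬝ᵥ x + s * t := by
  simp [dotProduct, Fin.sum_univ_castSucc]

theorem Matrix.of_snoc_mulVec (A : Fin m → Fin n → α) (u x : Fin n → α) :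
    of (Fin.snoc (α := fun _ => Fin n → α) A u) *ᵥ x = Fin.snoc (of A *ᵥ x) (u ⬝ᵥ x) := by
  ext i
  induction i using Fin.lastCases with
  | last => simp only [mulVec, of_apply, Fin.snoc_last]
  | cast i => simp only [mulVec, of_apply, Fin.snoc_castSucc]

end SnocAlgebra

theorem Fin.snoc_add_snoc {β : Type*} [Add β] {n : ℕ} (x y : Fin n → β) (s t : β) :
    (Fin.snoc x s : Fin (n + 1) → β) + Fin.snoc y t = Fin.snoc (x + y) (s + t) := by
  ext i
  induction i using Fin.lastCases <;> simp

theorem reluVec_snoc {n : ℕ} {x : Fin n → ℝ} (hx : 0 ≤ x) (t : ℝ) :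
    reluVec (Fin.snoc x t : Fin (n + 1) → ℝ) = Fin.snoc x (max 0 t) := by
  ext i
  induction i using Fin.lastCases with
  | last => simp [reluVec]
  | cast j => simpa [reluVec] using hx j

theorem partialSups_fin_last {β : Type*} [SemilatticeSup β] {n : ℕ} (f : Fin (n + 1) → β) :
    partialSups f (Fin.last n) = Finset.univ.sup' Finset.univ_nonempty f := by
  rw [partialSups_apply]
  congr
  ext i
  simp [Fin.le_last]

theorem affineMapVec_eq_mulVec_add {m n : ℕ} (W : Matrix (Fin m) (Fin n) ℝ) (b : Fin m → ℝ)
    (x : Fin n → ℝ) : affineMapVec W b x = W *ᵥ x + b :=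
  rfl

namespace MaxNet

variable {nx n : ℕ}

def embedMat (nx : ℕ) : Matrix (Fin (nx + 1)) (Fin nx) ℝ :=
  of <| Fin.snoc (α := fun _ => Fin nx → ℝ) (fun j => Pi.single j 1) 0

def shearMat (u : Fin nx → ℝ) : Matrix (Fin (nx + 1)) (Fin (nx + 1)) ℝ :=
  of <| Fin.snoc (α := fun _ => Fin (nx + 1) → ℝ) (fun j => Fin.snoc (Pi.single j 1) 0)
    (Fin.snoc u 1)

theorem embedMat_mulVec (x : Fin nx → ℝ) : embedMat nx *ᵥ x = Fin.snoc x 0 := by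
  rw [embedMat, of_snoc_mulVec, zero_dotProduct]
  congr 1
  ext j
  exact single_one_dotProduct j x

theorem shearMat_mulVec (u x : Fin nx → ℝ) (t : ℝ) :
    shearMat u *ᵥ Fin.snoc x t = Fin.snoc x (u ⬝ᵥ x + t) := by
  rw [shearMat, of_snoc_mulVec, Fin.snoc_dotProduct_snoc, one_mul]
  congr 1
  ext j
  simp only [mulVec, of_apply]
  rw [Fin.snoc_dotProduct_snoc, single_one_dotProduct, zero_mul, add_zero]

noncomputable def params (a : Fin (n + 1) → Fin nx → ℝ) (c : Fin (n + 1) → ℝ) :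
    ReLUNetParams nx 1 (nx + 1) (n + 1) where
  W1 := embedMat nx
  b1 := 0
  W l := shearMat (a l.castSucc - a l.succ)
  b l := Fin.snoc 0 (c l.castSucc - c l.succ)
  Wout := Matrix.of fun _ => Fin.snoc (a (Fin.last n)) 1
  bout := fun _ => c (Fin.last n)

variable (a : Fin (n + 1) → Fin nx → ℝ) (c : Fin (n + 1) → ℝ) {x : Fin nx → ℝ}

theorem params_hiddenLayer (hx : 0 ≤ x) (l : Fin n) (t : ℝ) :
    reluVec (affineMapVec ((params a c).W l) ((params a c).b l) (Fin.snoc x t)) =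
      Fin.snoc x (max 0 (t + (a l.castSucc ⬝ᵥ x + c l.castSucc) - (a l.succ ⬝ᵥ x + c l.succ))) := by
  have hmul := shearMat_mulVec (a l.castSucc - a l.succ) x t
  simp only [affineMapVec_eq_mulVec_add, params, hmul, Fin.snoc_add_snoc, add_zero,
    reluVec_snoc hx, sub_dotProduct]
  congr 2
  ring

theorem params_eval (hx : 0 ≤ x) :
    (params a c).eval x 0 = partialSups (fun i => a i ⬝ᵥ x + c i) (Fin.last n) := by
  set A := fun i => a i ⬝ᵥ x + c i
  have h0 : reluVec (affineMapVec (params a c).W1 (params a c).b1 x) =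
      Fin.snoc x (partialSups A 0 - A 0) := by
    rw [← bot_eq_zero, partialSups_bot, sub_self]
    simp only [affineMapVec_eq_mulVec_add, params, embedMat_mulVec, add_zero, reluVec_snoc hx,
      max_self]
  have hstep (l : Fin n) : reluVec (affineMapVec ((params a c).W l) ((params a c).b l)
      (Fin.snoc x (partialSups A l.castSucc - A l.castSucc))) =
      Fin.snoc x (partialSups A l.succ - A l.succ) := by
    rw [params_hiddenLayer a c hx, ← Fin.orderSucc_castSucc, partialSups_succ,
      Fin.orderSucc_castSucc, ← max_sub_sub_right, sub_self, max_comm]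
    congr 2
    ring
  obtain ⟨_, rfl, heval⟩ := (params a c).eval_eq_of_hiddenInvariant x
    (fun i ξ => ξ = Fin.snoc x (partialSups A i - A i)) h0 (by rintro l _ rfl; exact hstep l)
  rw [heval]
  simp only [affineMapVec_eq_mulVec_add, params, Pi.add_apply, mulVec, of_apply]
  rw [Fin.snoc_dotProduct_snoc]
  ring

end MaxNet

theorem max_of_affine_exact_relu_net_general (nx N : ℕ) (hN : 0 < N)
    (a : Fin N → Fin nx → ℝ) (c : Fin N → ℝ) (f : (Fin nx → ℝ) → ℝ)
    (hf : ∀ x, f x = finMax hN (fun i => (∑ j, a i j * x j) + c i)) :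
    ∃ θ : ReLUNetParams nx 1 (nx + 1) N, ∀ x ∈ unitCube nx, θ.eval x 0 = f x := by
  obtain ⟨n, rfl⟩ := Nat.exists_eq_add_one_of_ne_zero hN.ne'
  refine ⟨MaxNet.params a c, fun x hx => ?_⟩
  rw [MaxNet.params_eval a c fun i => (hx i).1, partialSups_fin_last, hf, finMax]
  rfl

/-- a nonnegative pointwise maximum of `N` affine functions on the unit cube
can be exactly represented by a ReLU network of width `nx + 1` and depth `N`. -/
theorem max_of_affine_exact_relu_net (nx N : ℕ) (hN : 0 < N)
    (a : Fin N → Fin nx → ℝ) (c : Fin N → ℝ) (f : (Fin nx → ℝ) → ℝ)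
    (hf : ∀ x, f x = finMax hN (fun i => (∑ j, a i j * x j) + c i))
    (hnonneg : ∀ x ∈ unitCube nx, 0 ≤ f x) :
    ∃ θ : ReLUNetParams nx 1 (nx + 1) N, ∀ x ∈ unitCube nx, θ.eval x 0 = f x :=
  max_of_affine_exact_relu_net_general nx N hN a c f hf
end

section
/- Let A ∈ ℝ^{n_x×n_x}, B ∈ ℝ^{n_x×n_u}, let U = {u ∈ ℝ^{n_u} : C_u u ≤ c_u} and let C_inv = {x ∈ ℝ^{n_x} : C_inv x ≤ c_inv} be a nonempty polytope that is control invariant, i.e., for every x ∈ C_inv there exists u ∈ U with A x + B u ∈ C_inv. Then for every x ∈ C_inv and every v ∈ ℝ^{n_u} (e.g., the output of a neural-network controller), the projection problem minimize ‖v − û‖₂² subject to C_u û ≤ c_u and C_inv(A x + B û) ≤ c_inv has a nonempty feasible set and attains a unique minimizer û*(x, v), which satisfies û*(x, v) ∈ U and A x + B û*(x, v) ∈ C_inv. Consequently, any closed-loop trajectory x_{k+1} = A x_k + B û*(x_k, v_k) starting from x_0 ∈ C_inv satisfies x_k ∈ C_inv and û*(x_k, v_k) ∈ U for all k ≥ 0,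 i.e., the projection problem remains feasible at all times. -/
/-! For fixed `x ∈ C_inv` the feasible inputs form the intersection of `U` with the preimage of
`C_inv` under `u ↦ A x + B u`: a closed convex set, nonempty by control invariance. In the
Euclidean (hence strictly convex, proper) space `ℝ^{n_u}` every nonempty closed convex set has a
unique nearest point to `v`, which is the projection `û*(x, v)`. Since `û*` keeps the successor
state in `C_inv`, recursive feasibility follows by induction along the trajectory. -/

open Finset Matrix

theorem exists_forall_dist_lt_of_convex {E : Type*} [NormedAddCommGroup E] [NormedSpace ℝ E]
    [StrictConvexSpace ℝ E] [ProperSpace E] {K : Set E} (hne : K.Nonempty) (hcl : IsClosed K)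
    (hconv : Convex ℝ K) (v : E) :
    ∃ w ∈ K, ∀ u ∈ K, u ≠ w → dist v w < dist v u := by
  obtain ⟨w, hwK, hw⟩ := hcl.exists_infDist_eq_dist hne v
  refine ⟨w, hwK, fun u huK huw => ?_⟩
  have hmin : ∀ z ∈ K, dist v w ≤ dist v z := fun z hz => hw ▸ Metric.infDist_le_dist_of_mem hz
  refine (hmin u huK).lt_of_ne fun heq => ?_
  -- the midpoint of two distinct nearest points would be strictly nearer
  have hmid : (1 / 2 : ℝ) • (u + w) ∈ K := by
    rw [smul_add]
    exact hconv huK hwK (by norm_num) (by norm_num) (by norm_num)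
  have hlt : ‖(1 / 2 : ℝ) • ((v - u) + (v - w))‖ < ‖v - u‖ :=
    (norm_midpoint_lt_iff (by rw [← dist_eq_norm, ← dist_eq_norm, heq])).2
      (by simpa [sub_eq_sub_iff_sub_eq_sub] using huw)
  have hrw : (1 / 2 : ℝ) • ((v - u) + (v - w)) = v - (1 / 2 : ℝ) • (u + w) := by
    module
  rw [hrw, ← dist_eq_norm, ← dist_eq_norm, ← heq] at hlt
  exact (hmin _ hmid).not_gt hlt

theorem exists_forall_sum_sq_lt_of_convex {ι : Type*} [Fintype ι] {K : Set (ι → ℝ)}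
    (hne : K.Nonempty) (hcl : IsClosed K) (hconv : Convex ℝ K) (v : ι → ℝ) :
    ∃ w ∈ K, ∀ u ∈ K, u ≠ w → ∑ i, (v i - w i) ^ 2 < ∑ i, (v i - u i) ^ 2 := by
  let e := EuclideanSpace.equiv ι ℝ
  obtain ⟨w, hwK, hw⟩ := exists_forall_dist_lt_of_convex (K := e ⁻¹' K)
    (hne.preimage e.surjective) (hcl.preimage e.continuous)
    (hconv.linear_preimage e.toLinearMap) (e.symm v)
  refine ⟨e w, hwK, fun u hu huw => ?_⟩
  have hlt := pow_lt_pow_left₀ (hw (e.symm u) (by simpa using hu) (by rintro rfl; simp at huw))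
    dist_nonneg two_ne_zero
  simpa [EuclideanSpace.dist_sq_eq, Real.dist_eq, sq_abs, e] using hlt

theorem convex_setOf_mulVec_le {m n : Type*} [Fintype n] (C : Matrix m n ℝ) (c : m → ℝ) :
    Convex ℝ {u | ∀ i, (C *ᵥ u) i ≤ c i} :=
  (convex_Iic c).linear_preimage C.mulVecLin

theorem isClosed_setOf_mulVec_le {m n : Type*} [Fintype n] (C : Matrix m n ℝ) (c : m → ℝ) :
    IsClosed {u | ∀ i, (C *ᵥ u) i ≤ c i} :=
  isClosed_Iic.preimage (continuous_const.matrix_mulVec continuous_id)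

section FeasibleInputs

variable {ι κ : Type*} [Fintype ι] [Fintype κ] (A : Matrix ι ι ℝ) (B : Matrix ι κ ℝ)
  {U : Set (κ → ℝ)} {C : Set (ι → ℝ)}

def feasibleInputs (U : Set (κ → ℝ)) (C : Set (ι → ℝ)) (x : ι → ℝ) : Set (κ → ℝ) :=
  U ∩ (fun u => A *ᵥ x + B *ᵥ u) ⁻¹' C

theorem convex_feasibleInputs (hU : Convex ℝ U) (hC : Convex ℝ C) (x : ι → ℝ) :
    Convex ℝ (feasibleInputs A B U C x) :=
  hU.inter ((hC.translate_preimage_right (A *ᵥ x)).linear_preimage B.mulVecLin)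

theorem isClosed_feasibleInputs (hU : IsClosed U) (hC : IsClosed C) (x : ι → ℝ) :
    IsClosed (feasibleInputs A B U C x) :=
  hU.inter (hC.preimage (continuous_const.add (continuous_const.matrix_mulVec continuous_id)))

end FeasibleInputs

theorem trajectory_mem_of_forall_mem {X V : Type*} {C : Set X} {f : X → V → X}
    (hf : ∀ x ∈ C, ∀ v, f x v ∈ C) {xs : ℕ → X} {vs : ℕ → V} (h0 : xs 0 ∈ C)
    (hstep : ∀ k, xs (k + 1) = f (xs k) (vs k)) : ∀ k, xs k ∈ C
  | 0 => h0
  | k + 1 => hstep k ▸ hf _ (trajectory_mem_of_forall_mem hf h0 hstep k) _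

theorem projection_feasibility_recovery_general (nx nu qu qi : ℕ)
    (A : Matrix (Fin nx) (Fin nx) ℝ) (B : Matrix (Fin nx) (Fin nu) ℝ)
    (Cu : Matrix (Fin qu) (Fin nu) ℝ) (cu : Fin qu → ℝ)
    (Ci : Matrix (Fin qi) (Fin nx) ℝ) (ci : Fin qi → ℝ)
    (U : Set (Fin nu → ℝ)) (hU : U = {u | ∀ i, (Cu *ᵥ u) i ≤ cu i})
    (Cinv : Set (Fin nx → ℝ)) (hCinv : Cinv = {x | ∀ i, (Ci *ᵥ x) i ≤ ci i})
    (hinv : ∀ x ∈ Cinv, ∃ u ∈ U, A *ᵥ x + B *ᵥ u ∈ Cinv) :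
    ∃ ustar : (Fin nx → ℝ) → (Fin nu → ℝ) → (Fin nu → ℝ),
      (∀ x ∈ Cinv, ∀ v : Fin nu → ℝ,
        -- the projection problem is feasible
        (∃ u, u ∈ U ∧ A *ᵥ x + B *ᵥ u ∈ Cinv) ∧
        -- the minimizer is feasible
        (ustar x v ∈ U ∧ A *ᵥ x + B *ᵥ ustar x v ∈ Cinv) ∧
        -- and it is the unique minimizer of ‖v − û‖₂²
        (∀ u, u ∈ U → A *ᵥ x + B *ᵥ u ∈ Cinv → u ≠ ustar x v →
          (∑ i, (v i - ustar x v i) ^ 2) < ∑ i, (v i - u i) ^ 2)) ∧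
      -- recursive feasibility of the closed loop
      (∀ (xs : ℕ → Fin nx → ℝ) (vs : ℕ → Fin nu → ℝ),
        xs 0 ∈ Cinv →
        (∀ k, xs (k + 1) = A *ᵥ xs k + B *ᵥ ustar (xs k) (vs k)) →
        ∀ k, xs k ∈ Cinv ∧ ustar (xs k) (vs k) ∈ U) := by
  have hproj : ∀ x ∈ Cinv, ∀ v : Fin nu → ℝ, ∃ w ∈ feasibleInputs A B U Cinv x,
      ∀ u ∈ feasibleInputs A B U Cinv x, u ≠ w → ∑ i, (v i - w i) ^ 2 < ∑ i, (v i - u i) ^ 2 := by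
    subst hU hCinv
    exact fun x hx => exists_forall_sum_sq_lt_of_convex (hinv x hx)
      (isClosed_feasibleInputs A B (isClosed_setOf_mulVec_le Cu cu)
        (isClosed_setOf_mulVec_le Ci ci) x)
      (convex_feasibleInputs A B (convex_setOf_mulVec_le Cu cu)
        (convex_setOf_mulVec_le Ci ci) x)
  choose! ustar hfeas hmin using hproj
  refine ⟨ustar, fun x hx v => ⟨hinv x hx, hfeas x hx v, fun u hu hu' => hmin x hx v u ⟨hu, hu'⟩⟩,
    fun xs vs h0 hstep k => ?_⟩
  have hxk : xs k ∈ Cinv :=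
    trajectory_mem_of_forall_mem (fun x hx v => (hfeas x hx v).2) h0 hstep k
  exact ⟨hxk, (hfeas _ hxk _).1⟩

/-- feasibility recovery by projection onto a control invariant set keeps the
closed loop inside the invariant set and the inputs feasible at all times. -/
theorem projection_feasibility_recovery (nx nu qu qi : ℕ)
    (A : Matrix (Fin nx) (Fin nx) ℝ) (B : Matrix (Fin nx) (Fin nu) ℝ)
    (Cu : Matrix (Fin qu) (Fin nu) ℝ) (cu : Fin qu → ℝ)
    (Ci : Matrix (Fin qi) (Fin nx) ℝ) (ci : Fin qi → ℝ)
    (U : Set (Fin nu → ℝ)) (hU : U = {u | ∀ i, (Cu *ᵥ u) i ≤ cu i})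
    (Cinv : Set (Fin nx → ℝ)) (hCinv : Cinv = {x | ∀ i, (Ci *ᵥ x) i ≤ ci i})
    (hne : Cinv.Nonempty) (hbdd : Bornology.IsBounded Cinv)
    (hinv : ∀ x ∈ Cinv, ∃ u ∈ U, A *ᵥ x + B *ᵥ u ∈ Cinv) :
    ∃ ustar : (Fin nx → ℝ) → (Fin nu → ℝ) → (Fin nu → ℝ),
      (∀ x ∈ Cinv, ∀ v : Fin nu → ℝ,
        -- the projection problem is feasible
        (∃ u, u ∈ U ∧ A *ᵥ x + B *ᵥ u ∈ Cinv) ∧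
        -- the minimizer is feasible
        (ustar x v ∈ U ∧ A *ᵥ x + B *ᵥ ustar x v ∈ Cinv) ∧
        -- and it is the unique minimizer of ‖v − û‖₂²
        (∀ u, u ∈ U → A *ᵥ x + B *ᵥ u ∈ Cinv → u ≠ ustar x v →
          (∑ i, (v i - ustar x v i) ^ 2) < ∑ i, (v i - u i) ^ 2)) ∧
      -- recursive feasibility of the closed loop
      (∀ (xs : ℕ → Fin nx → ℝ) (vs : ℕ → Fin nu → ℝ),
        xs 0 ∈ Cinv →
        (∀ k, xs (k + 1) = A *ᵥ xs k + B *ᵥ ustar (xs k) (vs k)) →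
        ∀ k, xs k ∈ Cinv ∧ ustar (xs k) (vs k) ∈ U) :=
  projection_feasibility_recovery_general nx nu qu qi A B Cu cu Ci ci U hU Cinv hCinv hinv
end
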